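/- arXiv:2409.12928 — 2 statements merged into one kernel-verified Lean document; each statement's English description precedes it below -/
import Mathlib

section
/- Let U and C be discrete random variables and A binary with C ⊥ (A, Y) | U. Suppose P(A = 1 | U = u) is non-decreasing in u, E(Y | A = a, U = u) is non-decreasing in u for a = 0, 1, and P(U ≥ u | C = c) and P(U ≥ u | A = a, C = c) are non-decreasing in c for all u and a. Then P(A = 1 | C = c), E(Y | A = 1, C = c), and E(Y | A = 0, C = c) are all non-decreasing in c. -/
open Finset

private lemma key_aux {𝒰 : Type*} [LinearOrder 𝒰] (s : Finset 𝒰) :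
    ∀ f δ : 𝒰 → ℝ, (∀ u ∈ s, ∀ v ∈ s, u ≤ v → f u ≤ f v) → (∀ u ∈ s, 0 ≤ f u) →
    (∀ u ∈ s, 0 ≤ ∑ v ∈ s.filter (fun v => u ≤ v), δ v) → 0 ≤ ∑ u ∈ s, f u * δ u := by
  induction s using Finset.strongInduction with
  | _ s ih =>
    intro f δ hmono hpos htail
    rcases s.eq_empty_or_nonempty with rfl | hs
    · simp
    · set u₀ := s.min' hs with hu₀
      have hu₀s : u₀ ∈ s := s.min'_mem hs
      have hmin : ∀ u ∈ s, u₀ ≤ u := fun u hu => s.min'_le u hu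
      have hsumδ : 0 ≤ ∑ u ∈ s, δ u := by
        have h := htail u₀ hu₀s
        rwa [Finset.filter_true_of_mem (fun v hv => hmin v hv)] at h
      have hstep : 0 ≤ ∑ u ∈ s.erase u₀, (f u - f u₀) * δ u := by
        apply ih (s.erase u₀) (Finset.erase_ssubset hu₀s)
        · intro u hu v hv huv
          have := hmono u (Finset.mem_of_mem_erase hu) v (Finset.mem_of_mem_erase hv) huv
          linarith
        · intro u hu
          have := hmono u₀ hu₀s u (Finset.mem_of_mem_erase hu)
            (hmin u (Finset.mem_of_mem_erase hu))
          linarith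
        · intro u hu
          have hlt : u₀ < u :=
            lt_of_le_of_ne (hmin u (Finset.mem_of_mem_erase hu))
              (Ne.symm (Finset.ne_of_mem_erase hu))
          have h1 : (s.erase u₀).filter (fun v => u ≤ v) = s.filter (fun v => u ≤ v) := by
            rw [Finset.filter_erase]
            apply Finset.erase_eq_of_notMem
            simp only [Finset.mem_filter, not_and]
            intro _
            exact not_le.2 hlt
          rw [h1]
          exact htail u (Finset.mem_of_mem_erase hu)
      have hsplit : ∑ u ∈ s, f u * δ u
          = ∑ u ∈ s, ((f u - f u₀) * δ u + f u₀ * δ u) := by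
        apply Finset.sum_congr rfl
        intro u _
        ring
      rw [hsplit, Finset.sum_add_distrib, ← Finset.mul_sum]
      have hz : ∑ u ∈ s, (f u - f u₀) * δ u = ∑ u ∈ s.erase u₀, (f u - f u₀) * δ u := by
        rw [← Finset.sum_erase_add s _ hu₀s]
        simp
      rw [hz]
      have := mul_nonneg (hpos u₀ hu₀s) hsumδ
      linarith

private lemma key2 {𝒰 : Type*} [Fintype 𝒰] [LinearOrder 𝒰] [Nonempty 𝒰]
    (f δ : 𝒰 → ℝ) (hf : Monotone f) (h0 : ∑ u, δ u = 0)
    (hT : ∀ u, 0 ≤ ∑ v ∈ univ.filter (fun v => u ≤ v), δ v) :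
    0 ≤ ∑ u, f u * δ u := by
  set K := f ((univ : Finset 𝒰).min' univ_nonempty) with hK
  have h1 : 0 ≤ ∑ u, (f u - K) * δ u := by
    apply key_aux
    · intro u _ v _ huv
      have := hf huv
      linarith
    · intro u _
      have := hf ((univ : Finset 𝒰).min'_le u (mem_univ u))
      linarith
    · intro u _
      exact hT u
  have h2 : ∑ u, f u * δ u = ∑ u, (f u - K) * δ u + K * ∑ u, δ u := by
    rw [Finset.mul_sum, ← Finset.sum_add_distrib]
    apply Finset.sum_congr rfl
    intro u _
    ring
  rw [h2, h0]
  linarith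

private lemma mono_of_tail_mono {𝒰 𝒞 : Type*} [Fintype 𝒰] [Fintype 𝒞] [LinearOrder 𝒰]
    [LinearOrder 𝒞] [Nonempty 𝒰]
    (q : 𝒰 → 𝒞 → ℝ) (hq : ∀ u c, 0 < q u c)
    (f : 𝒰 → ℝ) (hf : Monotone f)
    (htail : ∀ u : 𝒰, Monotone (fun c =>
      (∑ v ∈ univ.filter (fun v => u ≤ v), q v c) / ∑ v, q v c)) :
    Monotone (fun c => ∑ u, f u * (q u c / ∑ v, q v c)) := by
  intro c₁ c₂ hc
  have hZ : ∀ c, 0 < ∑ v, q v c := fun c =>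
    Finset.sum_pos (fun v _ => hq v c) univ_nonempty
  set δ : 𝒰 → ℝ := fun u => q u c₂ / (∑ v, q v c₂) - q u c₁ / (∑ v, q v c₁) with hδ
  have h0 : ∑ u, δ u = 0 := by
    simp only [hδ, Finset.sum_sub_distrib, ← Finset.sum_div]
    rw [div_self (hZ c₂).ne', div_self (hZ c₁).ne']
    ring
  have hT : ∀ u, 0 ≤ ∑ v ∈ univ.filter (fun v => u ≤ v), δ v := by
    intro u
    have h := htail u hc
    simp only [hδ, Finset.sum_sub_distrib, ← Finset.sum_div]
    linarith [h]
  have := key2 f δ hf h0 hT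
  simp only [hδ, mul_sub, Finset.sum_sub_distrib] at this
  simp only
  linarith

/-- discrete `U, C`, binary `A`, `C ⊥ (A, Y) | U` (encoded by the product
structure of the joint law: `pU` is the pmf of `U`, `pA a u = P(A = a | U = u)`,
`m a u = E(Y | A = a, U = u)`, `pC u c = P(C = c | U = u)`).  If the propensity
`P(A = 1 | U = u)` and the outcome regressions `E(Y | A = a, U = u)` are non-decreasing
in `u`, and `P(U ≥ u | C = c)` and `P(U ≥ u | A = a, C = c)` are non-decreasing in `c`,
then `P(A = 1 | C = c)`, `E(Y | A = 1, C = c)` and `E(Y | A = 0, C = c)` are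
non-decreasing in `c`. -/
theorem stmt5 {𝒰 𝒞 : Type*} [Fintype 𝒰] [Fintype 𝒞] [LinearOrder 𝒰] [LinearOrder 𝒞]
    (pU : 𝒰 → ℝ) (pA : Fin 2 → 𝒰 → ℝ) (m : Fin 2 → 𝒰 → ℝ) (pC : 𝒰 → 𝒞 → ℝ)
    (hpU : ∀ u, 0 < pU u) (hpUsum : ∑ u, pU u = 1)
    (hpA : ∀ a u, 0 < pA a u) (hpAsum : ∀ u, pA 0 u + pA 1 u = 1)
    (hpC : ∀ u c, 0 < pC u c) (hpCsum : ∀ u, ∑ c, pC u c = 1)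
    (hpropmono : Monotone (pA 1))
    (hmmono : ∀ a, Monotone (m a))
    (hprd : ∀ u : 𝒰, Monotone (fun c =>
      (∑ v ∈ univ.filter (fun v => u ≤ v), pU v * pC v c) / ∑ v, pU v * pC v c))
    (hprdA : ∀ (a : Fin 2) (u : 𝒰), Monotone (fun c =>
      (∑ v ∈ univ.filter (fun v => u ≤ v), pU v * pA a v * pC v c) /
        ∑ v, pU v * pA a v * pC v c)) :
    Monotone (fun c => ∑ u, pA 1 u * (pU u * pC u c / ∑ v, pU v * pC v c)) ∧
    (∀ a : Fin 2, Monotone (fun c =>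
      ∑ u, m a u * (pU u * pA a u * pC u c / ∑ v, pU v * pA a v * pC v c))) := by
  have hne : Nonempty 𝒰 := by
    by_contra h
    rw [not_nonempty_iff] at h
    rw [Finset.univ_eq_empty, Finset.sum_empty] at hpUsum
    norm_num at hpUsum
  constructor
  · exact mono_of_tail_mono (fun u c => pU u * pC u c)
      (fun u c => mul_pos (hpU u) (hpC u c)) (pA 1) hpropmono hprd
  · intro a
    exact mono_of_tail_mono (fun u c => pU u * pA a u * pC u c)
      (fun u c => mul_pos (mul_pos (hpU u) (hpA a u)) (hpC u c)) (m a) (hmmono a) (hprdA a)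
end

section
/- Let U and C be ordinal random variables with K levels 1, ..., K and misclassification matrix p_ij = P(C = i | U = j). Suppose the matrix is horizontally tapered: for each fixed i, p_ij ≤ p_ik whenever j ≤ k ≤ i, and p_ij ≥ p_ik whenever i ≤ j ≤ k. Then P(C ≥ i | U = j) is non-decreasing in j for every i; that is, C is positively regression dependent on U. -/
open Finset

/-- If the misclassification matrix `p i j = P(C = i | U = j)` of ordinal
`C, U` with `K` levels is horizontally tapered, then `P(C ≥ i | U = j)` is non-decreasing
in `j` for every `i`: `C` is positively regression dependent on `U`. -/
theorem stmt16 {K : ℕ} (p : Fin K → Fin K → ℝ)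
    (hnn : ∀ i j, 0 ≤ p i j) (hcol : ∀ j, ∑ i, p i j = 1)
    (htaper₁ : ∀ i j k : Fin K, j ≤ k → k ≤ i → p i j ≤ p i k)
    (htaper₂ : ∀ i j k : Fin K, i ≤ j → j ≤ k → p i k ≤ p i j) :
    ∀ i j j' : Fin K, j ≤ j' →
      ∑ i' ∈ univ.filter (fun i' => i ≤ i'), p i' j ≤
      ∑ i' ∈ univ.filter (fun i' => i ≤ i'), p i' j' := by
  intro i j j' hjj'
  have split : ∀ a : Fin K,
      ∑ i' ∈ univ.filter (fun i' => i ≤ i'), p i' a +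
      ∑ i' ∈ univ.filter (fun i' => ¬ i ≤ i'), p i' a = 1 := by
    intro a
    rw [Finset.sum_filter_add_sum_filter_not]
    exact hcol a
  -- termwise argument when j' ≤ i
  have up : ∀ a b : Fin K, a ≤ b → b ≤ i →
      ∑ i' ∈ univ.filter (fun i' => i ≤ i'), p i' a ≤
      ∑ i' ∈ univ.filter (fun i' => i ≤ i'), p i' b := by
    intro a b hab hbi
    refine sum_le_sum fun i' hi' => ?_
    exact htaper₁ i' a b hab (hbi.trans (mem_filter.mp hi').2)
  -- complement argument when i ≤ j
  have comp : ∀ a b : Fin K, i ≤ a → a ≤ b →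
      ∑ i' ∈ univ.filter (fun i' => i ≤ i'), p i' a ≤
      ∑ i' ∈ univ.filter (fun i' => i ≤ i'), p i' b := by
    intro a b hia hab
    have ha := split a
    have hb := split b
    have hlow : ∑ i' ∈ univ.filter (fun i' => ¬ i ≤ i'), p i' b ≤
        ∑ i' ∈ univ.filter (fun i' => ¬ i ≤ i'), p i' a := by
      refine sum_le_sum fun i' hi' => ?_
      have hlt : i' < i := lt_of_not_ge (mem_filter.mp hi').2
      exact htaper₂ i' a b (hlt.le.trans hia) hab
    linarith
  rcases le_total j' i with h | h
  · exact up j j' hjj' h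
  · rcases le_total i j with h2 | h2
    · exact comp j j' h2 hjj'
    · exact (up j i h2 le_rfl).trans (comp i j' le_rfl h)
end
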